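/- arXiv:2408.15184 — 2 statements merged into one kernel-verified Lean document; each statement's English description precedes it below -/
import Mathlib

section
/- For every lasso (L, η) on Grph there exists a unique family of graph homomorphisms (f_G : L(G) ⟶ cc(G)), indexed by the objects G of Grph, such that f_G ∘ η_G = π_G for every graph G. In other words, the connected components lasso (cc, π) is the terminal object of the category of lassos on Grph, whose morphisms (L, η) ⟶ (L', η') are families of maps (f_G : L(G) ⟶ L'(G))_G satisfying f_G ∘ η_G = η'_G. -/
open CategoryTheory CategoryTheory.Limits

/-- The category of directed multigraphs, realized as the functor category from the
walking parallel pair (objects `zero` = edges, `one` = vertices; morphisms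
`left` = source, `right` = target) to `Type`. -/
abbrev Grph : Type 1 := WalkingParallelPair ⥤ Type

namespace Grph

/-- The source map of a graph. -/
def src (G : Grph) : G.obj .zero → G.obj .one := G.map .left

/-- The target map of a graph. -/
def tgt (G : Grph) : G.obj .zero → G.obj .one := G.map .right

/-- The connectivity relation on the vertices of a graph: the equivalence relation
generated by relating `u` and `v` whenever some edge has source `u` and target `v`. -/
def connRel (G : Grph) : G.obj .one → G.obj .one → Prop :=
  Relation.EqvGen fun u v => ∃ e, G.src e = u ∧ G.tgt e = v

lemma connRel_map {G H : Grph} (φ : G ⟶ H) {u v : G.obj .one} (h : G.connRel u v) :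
    H.connRel (φ.app .one u) (φ.app .one v) := by
  induction h with
  | rel u v h =>
      obtain ⟨e, he, he'⟩ := h
      refine Relation.EqvGen.rel _ _ ⟨φ.app .zero e, ?_, ?_⟩
      · rw [← he]; exact (types_congr_hom (φ.naturality WalkingParallelPairHom.left) e).symm
      · rw [← he']; exact (types_congr_hom (φ.naturality WalkingParallelPairHom.right) e).symm
  | refl u => exact Relation.EqvGen.refl _
  | symm u v _ ih => exact Relation.EqvGen.symm _ _ ih
  | trans u v w _ _ ih₁ ih₂ => exact Relation.EqvGen.trans _ _ _ ih₁ ih₂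

/-- The graph obtained from `G` by quotienting its vertex set by the connectivity
relation; its edge set is that of `G`. -/
def ccObj (G : Grph) : Grph :=
  parallelPair (TypeCat.ofHom fun e => Quot.mk G.connRel (G.src e))
    (TypeCat.ofHom fun e => Quot.mk G.connRel (G.tgt e))

/-- The action of the connected components construction on graph homomorphisms. -/
def ccMap {G H : Grph} (φ : G ⟶ H) : ccObj G ⟶ ccObj H :=
  parallelPairHom _ _ _ _ (φ.app .zero)
    (TypeCat.ofHom (Quot.map (φ.app .one) (fun _ _ h => connRel_map φ h)))
    (by
      ext e
      exact congrArg (Quot.mk H.connRel)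
        (types_congr_hom (φ.naturality WalkingParallelPairHom.left) e))
    (by
      ext e
      exact congrArg (Quot.mk H.connRel)
        (types_congr_hom (φ.naturality WalkingParallelPairHom.right) e))

/-- The connected components functor `cc : Grph ⥤ Grph`. -/
def cc : Grph ⥤ Grph where
  obj := ccObj
  map := ccMap
  map_id G := by
    apply NatTrans.ext
    funext x
    cases x
    · rfl
    · ext q
      induction q using Quot.ind
      rfl
  map_comp φ ψ := by
    apply NatTrans.ext
    funext x
    cases x
    · rfl
    · ext q
      induction q using Quot.ind
      rfl

/-- The quotient homomorphism `π_G : G ⟶ cc(G)` (identity on edges). -/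
def ccπ (G : Grph) : G ⟶ cc.obj G where
  app x := match x with
    | .zero => TypeCat.ofHom fun e => e
    | .one => TypeCat.ofHom fun v => Quot.mk G.connRel v
  naturality := by
    intro X Y (f : WalkingParallelPairHom X Y)
    cases f with
    | id =>
        show G.map (𝟙 _) ≫ _ = _ ≫ (cc.obj G).map (𝟙 _)
        rw [CategoryTheory.Functor.map_id, CategoryTheory.Functor.map_id,
          Category.id_comp, Category.comp_id]
    | left => rfl
    | right => rfl

/-- The graph with one vertex and two loop edges. -/
def twoLoops : Grph := parallelPair (TypeCat.ofHom fun _ : Bool => PUnit.unit)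
  (TypeCat.ofHom fun _ : Bool => PUnit.unit)

/-- The terminal graph: one vertex with a single loop edge. -/
def oneLoop : Grph := parallelPair (TypeCat.ofHom fun _ : PUnit => PUnit.unit)
  (TypeCat.ofHom fun _ : PUnit => PUnit.unit)

end Grph

/-- A lasso on a category `C`: an endofunctor preserving pushouts of spans of
monomorphisms, together with a natural transformation from the identity functor all of
whose components are epimorphisms. -/
structure Lasso (C : Type u) [Category.{v} C] where
  /-- The underlying endofunctor. -/
  L : C ⥤ C
  /-- The natural transformation from the identity functor. -/
  η : 𝟭 C ⟶ L
  /-- `L` preserves pushouts of spans of monomorphisms. -/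
  preserves_monic_pushouts :
    ∀ ⦃A B D P : C⦄ (f : A ⟶ B) (g : A ⟶ D) (h : B ⟶ P) (k : D ⟶ P),
      Mono f → Mono g → IsPushout f g h k →
      IsPushout (L.map f) (L.map g) (L.map h) (L.map k)
  /-- Every component of `η` is an epimorphism. -/
  epi_components : ∀ X : C, Epi (η.app X)

open Grph


section Aux

open Grph Function

namespace GrphAux

/-- Build a graph homomorphism from compatible edge/vertex maps. -/
def mkHom {A B : Grph} (fE : A.obj .zero → B.obj .zero) (fV : A.obj .one → B.obj .one)
    (hs : ∀ e, fV (A.src e) = B.src (fE e)) (ht : ∀ e, fV (A.tgt e) = B.tgt (fE e)) :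
    A ⟶ B where
  app x := match x with
    | .zero => TypeCat.ofHom fE
    | .one => TypeCat.ofHom fV
  naturality X Y m := by
    change WalkingParallelPairHom X Y at m
    cases m with
    | id =>
        show A.map (𝟙 _) ≫ _ = _ ≫ B.map (𝟙 _)
        rw [CategoryTheory.Functor.map_id, CategoryTheory.Functor.map_id,
          Category.id_comp, Category.comp_id]
    | left => ext e; exact hs e
    | right => ext e; exact ht e

/-- A convenient criterion for a commutative square of types to be a pushout. -/
lemma typesIsPushout {W X Y P : Type} {f : W ⟶ X} {g : W ⟶ Y} {h : X ⟶ P} {k : Y ⟶ P}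
    (comm : f ≫ h = g ≫ k)
    (hinj : Function.Injective h) (kinj : Function.Injective k)
    (jsurj : ∀ p, (∃ x, h x = p) ∨ (∃ y, k y = p))
    (overlap : ∀ x y, h x = k y → ∃ w, f w = x ∧ g w = y) :
    IsPushout f g h k := by
  classical
  let desc : ∀ s : PushoutCocone f g, P ⟶ s.pt := fun s => TypeCat.ofHom fun p =>
    if hp : ∃ x, h x = p then s.inl hp.choose
    else s.inr (((jsurj p).resolve_left hp).choose)
  have hdl : ∀ (s : PushoutCocone f g) (x : X), desc s (h x) = s.inl x := by
    intro s x
    have hp : ∃ x', h x' = h x := ⟨x, rfl⟩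
    simp only [desc, TypeCat.ofHom_apply, dif_pos hp]
    exact congrArg s.inl (hinj hp.choose_spec)
  have hdr : ∀ (s : PushoutCocone f g) (y : Y), desc s (k y) = s.inr y := by
    intro s y
    by_cases hp : ∃ x, h x = k y
    · simp only [desc, TypeCat.ofHom_apply, dif_pos hp]
      obtain ⟨w, hw1, hw2⟩ := overlap _ _ hp.choose_spec
      calc s.inl hp.choose = s.inl (f w) := by rw [hw1]
        _ = s.inr (g w) := types_congr_hom s.condition w
        _ = s.inr y := by rw [hw2]
    · simp only [desc, TypeCat.ofHom_apply, dif_neg hp]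
      exact congrArg s.inr (kinj ((jsurj (k y)).resolve_left hp).choose_spec)
  refine IsPushout.of_isColimit (PushoutCocone.IsColimit.mk comm desc
    (fun s => by ext x; exact hdl s x) (fun s => by ext y; exact hdr s y) ?_)
  intro s m h1 h2
  ext p
  rcases jsurj p with ⟨x, rfl⟩ | ⟨y, rfl⟩
  · exact (types_congr_hom h1 x).trans (hdl s x).symm
  · exact (types_congr_hom h2 y).trans (hdr s y).symm

/-- A pointwise pushout square in `Grph` is a pushout square. -/
lemma grphIsPushout {W X Y P : Grph} {f : W ⟶ X} {g : W ⟶ Y} {h : X ⟶ P} {k : Y ⟶ P}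
    (e : f ≫ h = g ≫ k)
    (pt : ∀ x, IsPushout (f.app x) (g.app x) (h.app x) (k.app x)) :
    IsPushout f g h k := by
  refine ⟨⟨e⟩, ⟨evaluationJointlyReflectsColimits _ fun x => ?_⟩⟩
  refine (IsColimit.equivOfNatIsoOfIso
      (spanCompIso ((evaluation WalkingParallelPair Type).obj x) f g).symm (pt x).cocone
      (((evaluation WalkingParallelPair Type).obj x).mapCocone (PushoutCocone.mk h k e))
      (WalkingSpan.ext (Iso.refl _) ?_ ?_)) (pt x).isColimit
  · ext a; rfl
  · ext a; rfl

/-- The empty graph. -/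
def emptyGr : Grph := parallelPair (TypeCat.ofHom fun x : Empty => (x.elim : Empty)) (TypeCat.ofHom fun x : Empty => (x.elim : Empty))

/-- The graph with two vertices, each carrying one loop. -/
def twoVerts : Grph := parallelPair (TypeCat.ofHom (id : Bool → Bool)) (TypeCat.ofHom id)

/-- The constant homomorphism into `twoLoops`. -/
def constLoop (X : Grph) (b : Bool) : X ⟶ twoLoops :=
  mkHom (fun _ => b) (fun _ => PUnit.unit) (fun _ => rfl) (fun _ => rfl)

/-- The constant homomorphism into `twoVerts`. -/
def constVert (X : Grph) (b : Bool) : X ⟶ twoVerts :=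
  mkHom (fun _ => b) (fun _ => b) (fun _ => rfl) (fun _ => rfl)

lemma lasso_app_surjective (l : Lasso Grph) (G : Grph) (x : WalkingParallelPair) :
    Function.Surjective ((l.η.app G).app x) := by
  have h := l.epi_components G
  rw [NatTrans.epi_iff_epi_app] at h
  exact (epi_iff_surjective _).mp (h x)

lemma lasso_obj_isEmpty (l : Lasso Grph) (G : Grph) (x : WalkingParallelPair)
    (hG : IsEmpty (G.obj x)) : IsEmpty ((l.L.obj G).obj x) :=
  ⟨fun y => hG.false (lasso_app_surjective l G x y).choose⟩

lemma lasso_edge_injective (l : Lasso Grph) (G : Grph) :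
    Function.Injective ((l.η.app G).app WalkingParallelPair.zero) := by
  intro e e' hee
  by_contra hne
  have hne' : e' ≠ e := fun h => hne h.symm
  let Vty := {v : G.obj .one // v = G.src e ∨ v = G.tgt e}
  let Vgr : Grph := parallelPair (TypeCat.ofHom fun x : Empty => (x.elim : Vty)) (TypeCat.ofHom fun x : Empty => (x.elim : Vty))
  let Igr : Grph := parallelPair (TypeCat.ofHom fun _ : PUnit => (⟨G.src e, Or.inl rfl⟩ : Vty))
      (TypeCat.ofHom fun _ => ⟨G.tgt e, Or.inr rfl⟩)
  let Agr : Grph := parallelPair (TypeCat.ofHom fun a : {a : G.obj .zero // a ≠ e} => G.src a.1)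
      (TypeCat.ofHom fun a => G.tgt a.1)
  let fVA : Vgr ⟶ Agr := mkHom (fun x => Empty.elim x) Subtype.val (fun x => Empty.elim x) (fun x => Empty.elim x)
  let gVI : Vgr ⟶ Igr := mkHom (fun x => Empty.elim x) id (fun x => Empty.elim x) (fun x => Empty.elim x)
  let mAG : Agr ⟶ G := mkHom Subtype.val id (fun _ => rfl) (fun _ => rfl)
  let jIG : Igr ⟶ G := mkHom (fun _ => e) Subtype.val (fun _ => rfl) (fun _ => rfl)
  have comm : fVA ≫ mAG = gVI ≫ jIG := by
    apply NatTrans.ext; funext x; cases x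
    · ext z; exact Empty.elim z
    · ext z; rfl
  have hpo : IsPushout fVA gVI mAG jIG := by
    apply grphIsPushout comm
    intro x
    cases x
    · refine typesIsPushout ?_ ?_ ?_ ?_ ?_
      · ext z; exact Empty.elim z
      · exact fun a b hab => Subtype.ext hab
      · exact fun a b _ => Subsingleton.elim (α := PUnit) a b
      · intro p
        by_cases hp : p = e
        · exact Or.inr ⟨PUnit.unit, hp.symm⟩
        · exact Or.inl ⟨⟨p, hp⟩, rfl⟩
      · intro a b hab
        have hab2 : a.1 = e := hab
        exact (a.2 hab2).elim
    · refine typesIsPushout ?_ ?_ ?_ ?_ ?_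
      · ext z; rfl
      · exact fun a b hab => hab
      · exact fun a b hab => Subtype.ext hab
      · exact fun p => Or.inl ⟨p, rfl⟩
      · intro a b hab
        exact ⟨b, hab.symm, rfl⟩
  have monf : Mono fVA := by
    have : ∀ x, Mono (fVA.app x) := by
      intro x; cases x
      · exact (mono_iff_injective _).mpr (fun a => Empty.elim a)
      · exact (mono_iff_injective _).mpr (fun a b hab => Subtype.ext hab)
    exact NatTrans.mono_of_mono_app _
  have mong : Mono gVI := by
    have : ∀ x, Mono (gVI.app x) := by
      intro x; cases x
      · exact (mono_iff_injective _).mpr (fun a => Empty.elim a)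
      · exact (mono_iff_injective _).mpr (fun a b hab => hab)
    exact NatTrans.mono_of_mono_app _
  have LPO := l.preserves_monic_pushouts fVA gVI mAG jIG monf mong hpo
  have hVempty : IsEmpty ((l.L.obj Vgr).obj WalkingParallelPair.zero) :=
    lasso_obj_isEmpty l Vgr WalkingParallelPair.zero ⟨fun z => Empty.elim z⟩
  have hcomp : l.L.map fVA ≫ constLoop (l.L.obj Agr) false
      = l.L.map gVI ≫ constLoop (l.L.obj Igr) true := by
    apply NatTrans.ext; funext x; cases x
    · ext z; exact (hVempty.false z).elim
    · ext z; rfl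
  have hu1 := LPO.inl_desc _ _ hcomp
  have hu2 := LPO.inr_desc _ _ hcomp
  set u := LPO.desc _ _ hcomp with hu
  have h1 : u.app WalkingParallelPair.zero ((l.η.app G).app WalkingParallelPair.zero e')
      = false := by
    have hn := types_congr_hom (congr_app (l.η.naturality mAG) WalkingParallelPair.zero)
      (⟨e', hne'⟩ : {a : G.obj .zero // a ≠ e})
    rw [show (l.η.app G).app WalkingParallelPair.zero e'
        = (l.L.map mAG).app WalkingParallelPair.zero
            ((l.η.app Agr).app WalkingParallelPair.zero ⟨e', hne'⟩) from hn]
    exact types_congr_hom (congr_app hu1 WalkingParallelPair.zero) _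
  have h2 : u.app WalkingParallelPair.zero ((l.η.app G).app WalkingParallelPair.zero e)
      = true := by
    have hn := types_congr_hom (congr_app (l.η.naturality jIG) WalkingParallelPair.zero) PUnit.unit
    rw [show (l.η.app G).app WalkingParallelPair.zero e
        = (l.L.map jIG).app WalkingParallelPair.zero
            ((l.η.app Igr).app WalkingParallelPair.zero PUnit.unit) from hn]
    exact types_congr_hom (congr_app hu2 WalkingParallelPair.zero) _
  rw [hee] at h2
  exact Bool.noConfusion (h2.symm.trans h1)

lemma lasso_vertex_conn (l : Lasso Grph) (G : Grph) (u v : G.obj .one)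
    (huv : (l.η.app G).app WalkingParallelPair.one u
      = (l.η.app G).app WalkingParallelPair.one v) : G.connRel u v := by
  by_contra hnc
  let S : G.obj .one → Prop := fun w => G.connRel u w
  have hS1 : ∀ (a : G.obj .zero), S (G.src a) → S (G.tgt a) := fun a ha =>
    Relation.EqvGen.trans _ _ _ ha (Relation.EqvGen.rel _ _ ⟨a, rfl, rfl⟩)
  have hS2 : ∀ (a : G.obj .zero), ¬ S (G.src a) → ¬ S (G.tgt a) := fun a ha hb =>
    ha (Relation.EqvGen.trans _ _ _ hb
      (Relation.EqvGen.symm _ _ (Relation.EqvGen.rel _ _ ⟨a, rfl, rfl⟩)))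
  let G₁ : Grph := parallelPair
    (TypeCat.ofHom fun a : {a : G.obj .zero // S (G.src a)} => (⟨G.src a.1, a.2⟩ : {w // S w}))
    (TypeCat.ofHom fun a => ⟨G.tgt a.1, hS1 a.1 a.2⟩)
  let G₂ : Grph := parallelPair
    (TypeCat.ofHom fun a : {a : G.obj .zero // ¬ S (G.src a)} => (⟨G.src a.1, a.2⟩ : {w // ¬ S w}))
    (TypeCat.ofHom fun a => ⟨G.tgt a.1, hS2 a.1 a.2⟩)
  let i₁ : G₁ ⟶ G := mkHom (fun a => a.1) (fun w => w.1) (fun _ => rfl) (fun _ => rfl)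
  let i₂ : G₂ ⟶ G := mkHom (fun a => a.1) (fun w => w.1) (fun _ => rfl) (fun _ => rfl)
  let e₁ : emptyGr ⟶ G₁ := mkHom (fun z => Empty.elim z) (fun z => Empty.elim z)
    (fun z => Empty.elim z) (fun z => Empty.elim z)
  let e₂ : emptyGr ⟶ G₂ := mkHom (fun z => Empty.elim z) (fun z => Empty.elim z)
    (fun z => Empty.elim z) (fun z => Empty.elim z)
  have comm : e₁ ≫ i₁ = e₂ ≫ i₂ := by
    apply NatTrans.ext; funext x; cases x <;> (ext z; exact Empty.elim z)
  have hpo : IsPushout e₁ e₂ i₁ i₂ := by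
    apply grphIsPushout comm
    intro x
    cases x
    · refine typesIsPushout ?_ ?_ ?_ ?_ ?_
      · ext z; exact Empty.elim z
      · exact fun a b hab => Subtype.ext hab
      · exact fun a b hab => Subtype.ext hab
      · intro p
        by_cases hp : S (G.src p)
        · exact Or.inl ⟨⟨p, hp⟩, rfl⟩
        · exact Or.inr ⟨⟨p, hp⟩, rfl⟩
      · intro a b hab
        have hab2 : a.1 = b.1 := hab
        exact (b.2 (hab2 ▸ a.2)).elim
    · refine typesIsPushout ?_ ?_ ?_ ?_ ?_
      · ext z; exact Empty.elim z
      · exact fun a b hab => Subtype.ext hab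
      · exact fun a b hab => Subtype.ext hab
      · intro p
        by_cases hp : S p
        · exact Or.inl ⟨⟨p, hp⟩, rfl⟩
        · exact Or.inr ⟨⟨p, hp⟩, rfl⟩
      · intro a b hab
        have hab2 : a.1 = b.1 := hab
        exact (b.2 (hab2 ▸ a.2)).elim
  have mon1 : Mono e₁ := by
    have : ∀ x, Mono (e₁.app x) := by
      intro x; cases x <;> exact (mono_iff_injective _).mpr (fun a => Empty.elim a)
    exact NatTrans.mono_of_mono_app _
  have mon2 : Mono e₂ := by
    have : ∀ x, Mono (e₂.app x) := by
      intro x; cases x <;> exact (mono_iff_injective _).mpr (fun a => Empty.elim a)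
    exact NatTrans.mono_of_mono_app _
  have LPO := l.preserves_monic_pushouts e₁ e₂ i₁ i₂ mon1 mon2 hpo
  have hEmpty : ∀ x, IsEmpty ((l.L.obj emptyGr).obj x) := fun x =>
    lasso_obj_isEmpty l _ x (by cases x <;> exact ⟨fun z => Empty.elim z⟩)
  have hcomp : l.L.map e₁ ≫ constVert (l.L.obj G₁) false
      = l.L.map e₂ ≫ constVert (l.L.obj G₂) true := by
    apply NatTrans.ext; funext x
    ext z; exact ((hEmpty x).false z).elim
  have hu1 := LPO.inl_desc _ _ hcomp
  have hu2 := LPO.inr_desc _ _ hcomp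
  set w := LPO.desc _ _ hcomp with hw
  have h1 : w.app WalkingParallelPair.one ((l.η.app G).app WalkingParallelPair.one u)
      = false := by
    have hn := types_congr_hom (congr_app (l.η.naturality i₁) WalkingParallelPair.one)
      (⟨u, Relation.EqvGen.refl u⟩ : {w // S w})
    rw [show (l.η.app G).app WalkingParallelPair.one u
        = (l.L.map i₁).app WalkingParallelPair.one
            ((l.η.app G₁).app WalkingParallelPair.one ⟨u, Relation.EqvGen.refl u⟩) from hn]
    exact types_congr_hom (congr_app hu1 WalkingParallelPair.one) _
  have h2 : w.app WalkingParallelPair.one ((l.η.app G).app WalkingParallelPair.one v)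
      = true := by
    have hn := types_congr_hom (congr_app (l.η.naturality i₂) WalkingParallelPair.one)
      (⟨v, hnc⟩ : {w // ¬ S w})
    rw [show (l.η.app G).app WalkingParallelPair.one v
        = (l.L.map i₂).app WalkingParallelPair.one
            ((l.η.app G₂).app WalkingParallelPair.one ⟨v, hnc⟩) from hn]
    exact types_congr_hom (congr_app hu2 WalkingParallelPair.one) _
  rw [huv] at h1
  exact Bool.noConfusion (h1.symm.trans h2)

/-- The canonical homomorphism `L(G) ⟶ cc(G)`. -/
noncomputable def lassoHom (l : Lasso Grph) (G : Grph) : l.L.obj G ⟶ Grph.cc.obj G :=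
  mkHom (Function.surjInv (lasso_app_surjective l G WalkingParallelPair.zero))
    (fun x => Quot.mk G.connRel (Function.surjInv (lasso_app_surjective l G WalkingParallelPair.one) x))
    (by
      intro x
      obtain ⟨a, rfl⟩ := lasso_app_surjective l G WalkingParallelPair.zero x
      have hsE : Function.surjInv (lasso_app_surjective l G WalkingParallelPair.zero)
          ((l.η.app G).app WalkingParallelPair.zero a) = a :=
        lasso_edge_injective l G
          (Function.surjInv_eq (lasso_app_surjective l G WalkingParallelPair.zero) _)
      show Quot.mk G.connRel _ = Quot.mk G.connRel (G.src (Function.surjInv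
        (lasso_app_surjective l G WalkingParallelPair.zero) ((l.η.app G).app WalkingParallelPair.zero a)))
      rw [hsE]
      have hnat : (l.L.obj G).src ((l.η.app G).app WalkingParallelPair.zero a)
          = (l.η.app G).app WalkingParallelPair.one (G.src a) :=
        (types_congr_hom ((l.η.app G).naturality WalkingParallelPairHom.left) a).symm
      rw [hnat]
      exact Quot.sound (lasso_vertex_conn l G _ _
        (Function.surjInv_eq (lasso_app_surjective l G WalkingParallelPair.one) _)))
    (by
      intro x
      obtain ⟨a, rfl⟩ := lasso_app_surjective l G WalkingParallelPair.zero x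
      have hsE : Function.surjInv (lasso_app_surjective l G WalkingParallelPair.zero)
          ((l.η.app G).app WalkingParallelPair.zero a) = a :=
        lasso_edge_injective l G
          (Function.surjInv_eq (lasso_app_surjective l G WalkingParallelPair.zero) _)
      show Quot.mk G.connRel _ = Quot.mk G.connRel (G.tgt (Function.surjInv
        (lasso_app_surjective l G WalkingParallelPair.zero) ((l.η.app G).app WalkingParallelPair.zero a)))
      rw [hsE]
      have hnat : (l.L.obj G).tgt ((l.η.app G).app WalkingParallelPair.zero a)
          = (l.η.app G).app WalkingParallelPair.one (G.tgt a) :=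
        (types_congr_hom ((l.η.app G).naturality WalkingParallelPairHom.right) a).symm
      rw [hnat]
      exact Quot.sound (lasso_vertex_conn l G _ _
        (Function.surjInv_eq (lasso_app_surjective l G WalkingParallelPair.one) _)))

lemma lassoHom_fac (l : Lasso Grph) (G : Grph) :
    l.η.app G ≫ lassoHom l G = ccπ G := by
  apply NatTrans.ext; funext x; cases x
  · ext a
    exact lasso_edge_injective l G
      (Function.surjInv_eq (lasso_app_surjective l G WalkingParallelPair.zero) _)
  · ext a
    exact Quot.sound (lasso_vertex_conn l G _ _
      (Function.surjInv_eq (lasso_app_surjective l G WalkingParallelPair.one) _))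

end GrphAux

end Aux


theorem stmt6 (l : Lasso Grph) :
    ∃! f : ∀ G : Grph, l.L.obj G ⟶ Grph.cc.obj G, ∀ G : Grph, l.η.app G ≫ f G = ccπ G := by
  refine ⟨fun G => GrphAux.lassoHom l G, fun G => GrphAux.lassoHom_fac l G, ?_⟩
  intro y hy
  funext G
  haveI := l.epi_components G
  exact (cancel_epi (l.η.app G)).mp ((hy G).trans (GrphAux.lassoHom_fac l G).symm)
end

section
/- The delooping functor deloop : RGrph ⥤ RGrph does not preserve all colimits of diagrams whose morphisms are monomorphisms: it fails to preserve the coequalizer of the two (monomorphic) morphisms from the terminal reflexive graph to the reflexive graph consisting of two vertices with exactly one edge between them (besides the two distinguished loops). Hence the lasso (deloop, δ) on RGrph is not a strong lasso. -/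
open CategoryTheory CategoryTheory.Limits

/-- The objects of the schema category for reflexive graphs: edges `E` and vertices `V`. -/
inductive SRGrObj : Type
  | E | V
  deriving DecidableEq

/-- The morphisms of the schema category for reflexive graphs: besides the identities,
the source and target maps `s t : E ⟶ V`, the distinguished-loop map `l : V ⟶ E`, and
the two composites `ls = s ≫ l` and `lt = t ≫ l` (subject to `l ≫ s = 𝟙 V` and
`l ≫ t = 𝟙 V`). -/
inductive SRGrHom : SRGrObj → SRGrObj → Type
  | ide (X : SRGrObj) : SRGrHom X X
  | s : SRGrHom .E .V
  | t : SRGrHom .E .V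
  | l : SRGrHom .V .E
  | ls : SRGrHom .E .E
  | lt : SRGrHom .E .E

namespace SRGrHom

/-- Composition in the schema category for reflexive graphs. -/
def comp : {X Y Z : SRGrObj} → SRGrHom X Y → SRGrHom Y Z → SRGrHom X Z
  | _, _, _, .ide _, g => g
  | _, _, _, .s, .ide _ => .s
  | _, _, _, .s, .l => .ls
  | _, _, _, .t, .ide _ => .t
  | _, _, _, .t, .l => .lt
  | _, _, _, .l, .ide _ => .l
  | _, _, _, .l, .s => .ide _
  | _, _, _, .l, .t => .ide _
  | _, _, _, .l, .ls => .l
  | _, _, _, .l, .lt => .l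
  | _, _, _, .ls, .ide _ => .ls
  | _, _, _, .ls, .s => .s
  | _, _, _, .ls, .t => .s
  | _, _, _, .ls, .ls => .ls
  | _, _, _, .ls, .lt => .ls
  | _, _, _, .lt, .ide _ => .lt
  | _, _, _, .lt, .s => .t
  | _, _, _, .lt, .t => .t
  | _, _, _, .lt, .ls => .lt
  | _, _, _, .lt, .lt => .lt

end SRGrHom

/-- The schema category for reflexive graphs. -/
instance : Category SRGrObj where
  Hom := SRGrHom
  id := SRGrHom.ide
  comp := SRGrHom.comp
  id_comp f := rfl
  comp_id f := by cases f <;> rfl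
  assoc f g h := by cases f <;> cases g <;> cases h <;> rfl

@[simp] lemma SRGrHom.comp_def {X Y Z : SRGrObj} (f : X ⟶ Y) (g : Y ⟶ Z) :
    f ≫ g = SRGrHom.comp f g := rfl

@[simp] lemma SRGrHom.id_def (X : SRGrObj) : 𝟙 X = SRGrHom.ide X := rfl

/-- The category of reflexive graphs, realized as the functor category from the schema
category `SRGrObj` to `Type`. -/
abbrev RGrph : Type 1 := SRGrObj ⥤ Type

/-- Build a reflexive graph from the data of a vertex set, an edge set, source and target
maps and a distinguished-loop map satisfying the reflexivity equations. -/
def mkRGrph (Vt Et : Type) (s t : Et → Vt) (l : Vt → Et)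
    (hs : ∀ v, s (l v) = v) (ht : ∀ v, t (l v) = v) : RGrph where
  obj X := match X with
    | .E => Et
    | .V => Vt
  map {X Y} f := match X, Y, f with
    | _, _, .ide _ => TypeCat.ofHom id
    | _, _, .s => TypeCat.ofHom s
    | _, _, .t => TypeCat.ofHom t
    | _, _, .l => TypeCat.ofHom l
    | _, _, .ls => TypeCat.ofHom fun e => l (s e)
    | _, _, .lt => TypeCat.ofHom fun e => l (t e)
  map_id X := rfl
  map_comp {X Y Z} f g := by
    change SRGrHom X Y at f
    change SRGrHom Y Z at g
    cases f <;> cases g <;> ext x <;>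
      simp [SRGrHom.comp_def, SRGrHom.comp, hs, ht, types_comp_apply]

namespace RGrph

@[simp] lemma map_l_s (G : RGrph) (v : G.obj .V) :
    G.map SRGrHom.s (G.map SRGrHom.l v) = v := by
  have h : G.map (SRGrHom.l ≫ SRGrHom.s) = G.map SRGrHom.l ≫ G.map SRGrHom.s :=
    G.map_comp _ _
  have h' : G.map (SRGrHom.l ≫ SRGrHom.s) = 𝟙 _ := G.map_id SRGrObj.V
  have := types_congr_hom (h.symm.trans h') v
  simpa [types_comp_apply] using this

@[simp] lemma map_l_t (G : RGrph) (v : G.obj .V) :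
    G.map SRGrHom.t (G.map SRGrHom.l v) = v := by
  have h : G.map (SRGrHom.l ≫ SRGrHom.t) = G.map SRGrHom.l ≫ G.map SRGrHom.t :=
    G.map_comp _ _
  have h' : G.map (SRGrHom.l ≫ SRGrHom.t) = 𝟙 _ := G.map_id SRGrObj.V
  have := types_congr_hom (h.symm.trans h') v
  simpa [types_comp_apply] using this

@[simp] lemma map_ls (G : RGrph) (e : G.obj .E) :
    G.map SRGrHom.ls e = G.map SRGrHom.l (G.map SRGrHom.s e) := by
  have h : G.map (SRGrHom.s ≫ SRGrHom.l) = G.map SRGrHom.s ≫ G.map SRGrHom.l :=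
    G.map_comp _ _
  exact types_congr_hom h e

@[simp] lemma map_lt (G : RGrph) (e : G.obj .E) :
    G.map SRGrHom.lt e = G.map SRGrHom.l (G.map SRGrHom.t e) := by
  have h : G.map (SRGrHom.t ≫ SRGrHom.l) = G.map SRGrHom.t ≫ G.map SRGrHom.l :=
    G.map_comp _ _
  exact types_congr_hom h e

@[simp] lemma map_ide (G : RGrph) (X : SRGrObj) (x : G.obj X) :
    G.map (SRGrHom.ide X) x = x := by
  have h : G.map (𝟙 X) = 𝟙 _ := G.map_id X
  simpa using types_congr_hom h x

/-- Build a morphism of reflexive graphs from an arbitrary reflexive graph `G` to one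
built by `mkRGrph`, from compatible vertex and edge maps. -/
def homToMk (G : RGrph) {Vt Et : Type} {s t : Et → Vt} {l : Vt → Et}
    {hs : ∀ v, s (l v) = v} {ht : ∀ v, t (l v) = v}
    (fv : G.obj .V → Vt) (fe : G.obj .E → Et)
    (hfs : ∀ e, s (fe e) = fv (G.map SRGrHom.s e))
    (hft : ∀ e, t (fe e) = fv (G.map SRGrHom.t e))
    (hfl : ∀ v, l (fv v) = fe (G.map SRGrHom.l v)) :
    G ⟶ mkRGrph Vt Et s t l hs ht where
  app X := match X with
    | .E => TypeCat.ofHom fe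
    | .V => TypeCat.ofHom fv
  naturality := by
    intro X Y f
    change SRGrHom X Y at f
    cases f <;> ext x <;>
      simp [mkRGrph, types_comp_apply, hfs, hft, hfl, CategoryTheory.Functor.map_id]

end RGrph

namespace RGrph

/-- The relation on edges identifying any two loops with the same endvertex. -/
def loopRel (G : RGrph) : G.obj .E → G.obj .E → Prop := fun e e' =>
  e = e' ∨ (G.map SRGrHom.s e = G.map SRGrHom.t e ∧
    G.map SRGrHom.s e' = G.map SRGrHom.t e' ∧
    G.map SRGrHom.s e = G.map SRGrHom.s e')

lemma loopRel_src {G : RGrph} {e e' : G.obj .E} (h : loopRel G e e') :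
    G.map SRGrHom.s e = G.map SRGrHom.s e' := by
  rcases h with rfl | ⟨_, _, h₃⟩
  · rfl
  · exact h₃

lemma loopRel_tgt {G : RGrph} {e e' : G.obj .E} (h : loopRel G e e') :
    G.map SRGrHom.t e = G.map SRGrHom.t e' := by
  rcases h with rfl | ⟨h₁, h₂, h₃⟩
  · rfl
  · rw [← h₁, ← h₂, h₃]

/-- The delooping of a reflexive graph: the same vertex set, with edge set the quotient
of the edges by the identification of loops sharing an endvertex. -/
def deloopObj (G : RGrph) : RGrph :=
  mkRGrph (G.obj .V) (Quot (loopRel G))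
    (Quot.lift (G.map SRGrHom.s) fun _ _ h => loopRel_src h)
    (Quot.lift (G.map SRGrHom.t) fun _ _ h => loopRel_tgt h)
    (fun v => Quot.mk _ (G.map SRGrHom.l v))
    (fun v => by simp)
    (fun v => by simp)

/-- The quotient morphism `G ⟶ deloopObj G`. -/
def deloopπ (G : RGrph) : G ⟶ deloopObj G :=
  homToMk G id (Quot.mk _) (fun _ => rfl) (fun _ => rfl) (fun _ => rfl)

lemma loopRel_of_map {G H : RGrph} (φ : G ⟶ H) {e e' : G.obj .E} (h : loopRel G e e') :
    loopRel H (φ.app .E e) (φ.app .E e') := by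
  have hs : ∀ x, H.map SRGrHom.s (φ.app .E x) = φ.app .V (G.map SRGrHom.s x) :=
    fun x => (types_congr_hom (φ.naturality SRGrHom.s) x).symm
  have ht : ∀ x, H.map SRGrHom.t (φ.app .E x) = φ.app .V (G.map SRGrHom.t x) :=
    fun x => (types_congr_hom (φ.naturality SRGrHom.t) x).symm
  rcases h with rfl | ⟨h₁, h₂, h₃⟩
  · exact Or.inl rfl
  · exact Or.inr ⟨by rw [hs, ht, h₁], by rw [hs, ht, h₂], by rw [hs, hs, h₃]⟩

/-- The action of delooping on morphisms of reflexive graphs. -/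
def deloopMap {G H : RGrph} (φ : G ⟶ H) : deloopObj G ⟶ deloopObj H :=
  homToMk (deloopObj G) (φ.app .V : G.obj .V → H.obj .V)
    (Quot.map (φ.app .E) fun _ _ h => loopRel_of_map φ h)
    (fun e => by
      change Quot _ at e
      induction e using Quot.ind
      exact (types_congr_hom (φ.naturality SRGrHom.s) _).symm)
    (fun e => by
      change Quot _ at e
      induction e using Quot.ind
      exact (types_congr_hom (φ.naturality SRGrHom.t) _).symm)
    (fun v => by
      have h := types_congr_hom (φ.naturality SRGrHom.l) v
      simp only [types_comp_apply, Functor.id_map] at h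
      exact congrArg (Quot.mk _) h.symm)

/-- The delooping functor on reflexive graphs. -/
def deloop : RGrph ⥤ RGrph where
  obj := deloopObj
  map := deloopMap
  map_id G := by
    apply NatTrans.ext
    funext X
    cases X
    · ext e
      change Quot _ at e
      induction e using Quot.ind
      rfl
    · ext x
      rfl
  map_comp φ ψ := by
    apply NatTrans.ext
    funext X
    cases X
    · ext e
      change Quot _ at e
      induction e using Quot.ind
      rfl
    · ext x
      rfl

/-- The componentwise quotient natural transformation `δ : 𝟭 RGrph ⟶ deloop`. -/
def deloopUnit : 𝟭 RGrph ⟶ deloop where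
  app := deloopπ
  naturality := by
    intro G H φ
    apply NatTrans.ext
    funext X
    cases X <;> ext x <;> rfl

end RGrph

namespace RGrph

/-- The relation identifying parallel edges (same source and same target). -/
def parRel (G : RGrph) : G.obj .E → G.obj .E → Prop := fun e e' =>
  G.map SRGrHom.s e = G.map SRGrHom.s e' ∧ G.map SRGrHom.t e = G.map SRGrHom.t e'

lemma parRel_of_map {G H : RGrph} (φ : G ⟶ H) {e e' : G.obj .E} (h : parRel G e e') :
    parRel H (φ.app .E e) (φ.app .E e') := by
  have hs : ∀ x, H.map SRGrHom.s (φ.app .E x) = φ.app .V (G.map SRGrHom.s x) :=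
    fun x => (types_congr_hom (φ.naturality SRGrHom.s) x).symm
  have ht : ∀ x, H.map SRGrHom.t (φ.app .E x) = φ.app .V (G.map SRGrHom.t x) :=
    fun x => (types_congr_hom (φ.naturality SRGrHom.t) x).symm
  exact ⟨by rw [hs, hs, h.1], by rw [ht, ht, h.2]⟩

/-- The smoothing of a reflexive graph: the same vertex set, with edge set the quotient
of the edges by the identification of parallel edges. -/
def smoothObj (G : RGrph) : RGrph :=
  mkRGrph (G.obj .V) (Quot (parRel G))
    (Quot.lift (G.map SRGrHom.s) fun _ _ h => h.1)
    (Quot.lift (G.map SRGrHom.t) fun _ _ h => h.2)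
    (fun v => Quot.mk _ (G.map SRGrHom.l v))
    (fun v => by simp)
    (fun v => by simp)

/-- The action of smoothing on morphisms of reflexive graphs. -/
def smoothMap {G H : RGrph} (φ : G ⟶ H) : smoothObj G ⟶ smoothObj H :=
  homToMk (smoothObj G) (φ.app .V : G.obj .V → H.obj .V)
    (Quot.map (φ.app .E) fun _ _ h => parRel_of_map φ h)
    (fun e => by
      change Quot _ at e
      induction e using Quot.ind
      exact (types_congr_hom (φ.naturality SRGrHom.s) _).symm)
    (fun e => by
      change Quot _ at e
      induction e using Quot.ind
      exact (types_congr_hom (φ.naturality SRGrHom.t) _).symm)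
    (fun v => by
      have h := types_congr_hom (φ.naturality SRGrHom.l) v
      simp only [types_comp_apply, Functor.id_map] at h
      exact congrArg (Quot.mk _) h.symm)

/-- The smoothing functor on reflexive graphs. -/
def smooth : RGrph ⥤ RGrph where
  obj := smoothObj
  map := smoothMap
  map_id G := by
    apply NatTrans.ext
    funext X
    cases X
    · ext e
      change Quot _ at e
      induction e using Quot.ind
      rfl
    · ext x
      rfl
  map_comp φ ψ := by
    apply NatTrans.ext
    funext X
    cases X
    · ext e
      change Quot _ at e
      induction e using Quot.ind
      rfl
    · ext x
      rfl

/-- The terminal reflexive graph: one vertex with its distinguished loop. -/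
def terminalRGrph : RGrph :=
  mkRGrph PUnit PUnit (fun _ => PUnit.unit) (fun _ => PUnit.unit) (fun _ => PUnit.unit)
    (fun v => by cases v; rfl) (fun v => by cases v; rfl)

/-- The reflexive graph with two vertices, their two distinguished loops, and exactly one
further edge between the two vertices. -/
def edgeRGrph : RGrph :=
  mkRGrph Bool (Option Bool)
    (fun e => e.getD false) (fun e => e.getD true) (fun v => some v)
    (fun v => rfl) (fun v => rfl)

/-- The morphism from the terminal reflexive graph picking out the vertex `false`. -/
def edgePtFalse : terminalRGrph ⟶ edgeRGrph :=
  homToMk terminalRGrph (fun _ => false) (fun _ => some false)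
    (fun _ => rfl) (fun _ => rfl) (fun _ => rfl)

/-- The morphism from the terminal reflexive graph picking out the vertex `true`. -/
def edgePtTrue : terminalRGrph ⟶ edgeRGrph :=
  homToMk terminalRGrph (fun _ => true) (fun _ => some true)
    (fun _ => rfl) (fun _ => rfl) (fun _ => rfl)

end RGrph

namespace RGrph

/-- Build a morphism of reflexive graphs from compatible vertex and edge maps. -/
def mkHom (G H : RGrph) (fv : G.obj .V → H.obj .V) (fe : G.obj .E → H.obj .E)
    (hfs : ∀ e, H.map SRGrHom.s (fe e) = fv (G.map SRGrHom.s e))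
    (hft : ∀ e, H.map SRGrHom.t (fe e) = fv (G.map SRGrHom.t e))
    (hfl : ∀ v, H.map SRGrHom.l (fv v) = fe (G.map SRGrHom.l v)) :
    G ⟶ H where
  app X := match X with
    | .E => TypeCat.ofHom fe
    | .V => TypeCat.ofHom fv
  naturality := by
    intro X Y f
    change SRGrHom X Y at f
    cases f <;> ext x <;>
      simp [types_comp_apply, hfs, hft, hfl, map_ls, map_lt, map_ide,
        CategoryTheory.Functor.map_id]

/-- The coequalizer point: one vertex, its distinguished loop, and one further loop. -/
def Qpt : RGrph :=
  mkRGrph PUnit (Option PUnit) (fun _ => PUnit.unit) (fun _ => PUnit.unit)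
    (fun _ => some PUnit.unit) (fun _ => rfl) (fun _ => rfl)

/-- The quotient map from the edge graph to `Qpt`. -/
def ιQ : edgeRGrph ⟶ Qpt :=
  homToMk edgeRGrph (fun _ => PUnit.unit) (Option.map fun _ => PUnit.unit)
    (fun e => rfl) (fun e => rfl) (fun v => rfl)

lemma c0_cond : edgePtFalse ≫ ιQ = edgePtTrue ≫ ιQ := by
  apply NatTrans.ext
  funext X
  cases X <;> (ext x; rfl)

/-- The coequalizer cocone. -/
def c0 : Cofork edgePtFalse edgePtTrue := Cofork.ofπ ιQ c0_cond

lemma key_vt (s : Cofork edgePtFalse edgePtTrue) :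
    s.π.app SRGrObj.V true = s.π.app SRGrObj.V false := by
  have h := s.condition
  have := types_congr_hom (congrArg (fun (α : terminalRGrph ⟶ s.pt) => α.app SRGrObj.V) h) PUnit.unit
  exact this.symm

lemma nat_s (s : Cofork edgePtFalse edgePtTrue) (e : edgeRGrph.obj .E) :
    s.pt.map SRGrHom.s (s.π.app SRGrObj.E e) = s.π.app SRGrObj.V (edgeRGrph.map SRGrHom.s e) :=
  (types_congr_hom (s.π.naturality SRGrHom.s) e).symm

lemma nat_t (s : Cofork edgePtFalse edgePtTrue) (e : edgeRGrph.obj .E) :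
    s.pt.map SRGrHom.t (s.π.app SRGrObj.E e) = s.π.app SRGrObj.V (edgeRGrph.map SRGrHom.t e) :=
  (types_congr_hom (s.π.naturality SRGrHom.t) e).symm

lemma nat_l (s : Cofork edgePtFalse edgePtTrue) (v : edgeRGrph.obj .V) :
    s.pt.map SRGrHom.l (s.π.app SRGrObj.V v) = s.π.app SRGrObj.E (edgeRGrph.map SRGrHom.l v) :=
  (types_congr_hom (s.π.naturality SRGrHom.l) v).symm

lemma key_e (s : Cofork edgePtFalse edgePtTrue) :
    s.π.app SRGrObj.E (some true) = s.π.app SRGrObj.E (some false) := by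
  have h1 := nat_l s true
  have h2 := nat_l s false
  rw [key_vt s] at h1
  exact h1.symm.trans h2

/-- The descent morphism out of the coequalizer cocone. -/
def c0desc (s : Cofork edgePtFalse edgePtTrue) : Qpt ⟶ s.pt :=
  mkHom Qpt s.pt (fun _ => s.π.app SRGrObj.V false)
    (fun e => match e with
      | none => s.π.app SRGrObj.E none
      | some _ => s.π.app SRGrObj.E (some false))
    (fun e => by
      cases e
      · exact nat_s s none
      · exact nat_s s (some false))
    (fun e => by
      cases e
      · exact (nat_t s none).trans (key_vt s)
      · exact nat_t s (some false))
    (fun v => nat_l s false)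

lemma c0fac (s : Cofork edgePtFalse edgePtTrue) : Cofork.π c0 ≫ c0desc s = Cofork.π s := by
  apply NatTrans.ext
  funext X
  cases X
  · ext e
    match e with
    | none => rfl
    | some false => rfl
    | some true => exact (key_e s).symm
  · ext v
    match v with
    | false => rfl
    | true => exact (key_vt s).symm

/-- The coequalizer cocone is a colimit. -/
def c0colim : IsColimit c0 :=
  Cofork.IsColimit.mk c0 c0desc c0fac (by
    intro s m hm
    apply NatTrans.ext
    funext X
    cases X
    · ext e
      match e with
      | none =>
          exact types_congr_hom (congrArg (fun (α : edgeRGrph ⟶ s.pt) => α.app SRGrObj.E) hm) none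
      | some PUnit.unit =>
          exact types_congr_hom (congrArg (fun (α : edgeRGrph ⟶ s.pt) => α.app SRGrObj.E) hm)
            (some false)
    · ext v
      match v with
      | PUnit.unit =>
          exact types_congr_hom (congrArg (fun (α : edgeRGrph ⟶ s.pt) => α.app SRGrObj.V) hm) false)

/-- The separating morphism out of the delooping of the edge graph. -/
def nSep : deloopObj edgeRGrph ⟶ Qpt :=
  mkHom (deloopObj edgeRGrph) Qpt (fun _ => PUnit.unit)
    (Quot.lift (Option.map fun _ => PUnit.unit) (by
      intro e e' h
      rcases h with rfl | ⟨h1, h2, h3⟩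
      · rfl
      · match e, e' with
        | some _, some _ => rfl
        | none, _ => exact absurd h1 (fun h => Bool.false_ne_true h)
        | some _, none => exact absurd h2 (fun h => Bool.false_ne_true h)))
    (fun e => by change Quot _ at e; induction e using Quot.ind; rfl)
    (fun e => by change Quot _ at e; induction e using Quot.ind; rfl)
    (fun v => rfl)

/-- The competing cocone on the delooped diagram. -/
def tSep : Cocone (parallelPair edgePtFalse edgePtTrue ⋙ deloop) where
  pt := Qpt
  ι := {
    app := fun j => match j with
      | .zero => deloop.map edgePtFalse ≫ nSep
      | .one => nSep
    naturality := by
      intro j j' φ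
      change WalkingParallelPairHom j j' at φ
      cases φ <;>
        · apply NatTrans.ext
          funext X
          cases X
          · ext e
            change Quot _ at e
            induction e using Quot.ind
            rfl
          · ext v
            rfl }

lemma quot_eq : (Quot.mk (loopRel Qpt) none : (deloopObj Qpt).obj .E)
    = Quot.mk (loopRel Qpt) (some PUnit.unit) :=
  Quot.sound (Or.inr ⟨rfl, rfl, rfl⟩)

lemma notColim : IsEmpty (IsColimit (deloop.mapCocone c0)) := by
  constructor
  intro hc
  have fac := hc.fac tSep WalkingParallelPair.one
  have h1 := types_congr_hom
    (congrArg (fun (α : deloopObj edgeRGrph ⟶ Qpt) => α.app SRGrObj.E) fac)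
    (Quot.mk _ none)
  have h2 := types_congr_hom
    (congrArg (fun (α : deloopObj edgeRGrph ⟶ Qpt) => α.app SRGrObj.E) fac)
    (Quot.mk _ (some false))
  have hA : (hc.desc tSep).app SRGrObj.E (Quot.mk (loopRel Qpt) none)
      = (none : Option PUnit) := h1
  have hB : (hc.desc tSep).app SRGrObj.E (Quot.mk (loopRel Qpt) (some PUnit.unit))
      = some PUnit.unit := h2
  rw [quot_eq, hB] at hA
  exact Option.some_ne_none _ hA

end RGrph


open RGrph

theorem stmt19 :
    Mono edgePtFalse ∧ Mono edgePtTrue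
    ∧ (∃ c : Cocone (parallelPair edgePtFalse edgePtTrue), Nonempty (IsColimit c))
    ∧ (∀ c : Cocone (parallelPair edgePtFalse edgePtTrue),
        IsColimit c → IsEmpty (IsColimit (deloop.mapCocone c)))
    ∧ ¬ (∀ (J : Type) [SmallCategory J] (d : J ⥤ RGrph),
          (∀ {i j : J} (φ : i ⟶ j), Mono (d.map φ)) →
          ∀ (c : Cocone d), IsColimit c → Nonempty (IsColimit (deloop.mapCocone c))) := by
  have mono1 : Mono edgePtFalse := by
    constructor
    intro Z g h _
    apply NatTrans.ext
    funext X
    cases X <;> (ext x; exact Subsingleton.elim (α := PUnit) _ _)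
  have mono2 : Mono edgePtTrue := by
    constructor
    intro Z g h _
    apply NatTrans.ext
    funext X
    cases X <;> (ext x; exact Subsingleton.elim (α := PUnit) _ _)
  have key : ∀ c : Cocone (parallelPair edgePtFalse edgePtTrue),
      IsColimit c → IsEmpty (IsColimit (deloop.mapCocone c)) := by
    intro c hc
    constructor
    intro hmc
    have iso : c ≅ (c0 : Cocone (parallelPair edgePtFalse edgePtTrue)) :=
      hc.uniqueUpToIso c0colim
    have iso' : deloop.mapCocone c ≅ deloop.mapCocone c0 :=
      (Cocones.functoriality _ deloop).mapIso iso
    exact notColim.false (IsColimit.ofIsoColimit hmc iso')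
  refine ⟨mono1, mono2, ⟨c0, ⟨c0colim⟩⟩, key, ?_⟩
  intro h
  have hmono : ∀ {i j : WalkingParallelPair} (φ : i ⟶ j),
      Mono ((parallelPair edgePtFalse edgePtTrue).map φ) := by
    intro i j φ
    change WalkingParallelPairHom i j at φ
    cases φ with
    | left => exact mono1
    | right => exact mono2
    | id =>
        have hid : (WalkingParallelPairHom.id i : i ⟶ i) = 𝟙 i := rfl
        rw [hid]
        simp only [CategoryTheory.Functor.map_id]
        infer_instance
  have := h WalkingParallelPair (parallelPair edgePtFalse edgePtTrue) hmono c0 c0colim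
  exact (key c0 c0colim).false this.some
end
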